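/- For every zigzag path b of length n there exists a unique continuous nondecreasing function θ : [0,1] → ℝ with θ(0) = π and cos(θ(t)) = 2·b(t) − 1 for all t ∈ [0,1]; moreover this θ satisfies θ(1) = (n+1)·π. (This is the unique lifting of the controlled path b along the projection p : c₂𝕊¹ → c𝕀∼, p(x,y) = (x+1)/2, used in the proof of Theorem 1.7.) -/

import Mathlib

open Set

def IsZigzag (b : ℝ → ℝ) (n : ℕ) : Prop :=
  ContinuousOn b (Icc 0 1) ∧ (∀ t ∈ Icc (0:ℝ) 1, b t ∈ Icc (0:ℝ) 1) ∧
  ((n = 0 ∧ ∀ t ∈ Icc (0:ℝ) 1, b t = 0) ∨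
   (1 ≤ n ∧ ∃ t : ℕ → ℝ, t 0 = 0 ∧ t n = 1 ∧
     (∀ i < n, t i < t (i + 1)) ∧
     (∀ i ≤ n, b (t i) = if Odd i then 1 else 0) ∧
     (∀ i, 1 ≤ i → i ≤ n →
       if Odd i then MonotoneOn b (Icc (t (i - 1)) (t i))
       else AntitoneOn b (Icc (t (i - 1)) (t i)))))

/-!
Write `u = 2b - 1`, so a lift is a continuous monotone angle `θ` with `cos θ = u`. On the `i`-th
piece of the zigzag, `(-1)^(i+1) u` decreases from `1` to `-1`, and `θ - (i+1)π` starts at `0`.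
It cannot leave `[0, π]`: otherwise, by the intermediate value theorem, it would pass through `π`
and then `2π`, where its cosine would have climbed from `-1` back to `1`. Hence
`θ = (i+1)π + arccos ((-1)^(i+1) u)` on that piece, which determines `θ` and ends the piece at
`(i+2)π`. Conversely, summing these arccos terms, each clamped to its piece, gives a lift.
-/

open Real

structure IsAngleLift (u θ : ℝ → ℝ) : Prop where
  continuousOn : ContinuousOn θ (Icc 0 1)
  monotoneOn : MonotoneOn θ (Icc 0 1)
  map_zero : θ 0 = π
  cos_eq : ∀ s ∈ Icc (0 : ℝ) 1, cos (θ s) = u s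

theorem neg_one_pow_mul_neg_one_pow_succ (m : ℕ) : (-1 : ℝ) ^ m * (-1) ^ (m + 1) = -1 := by
  rw [pow_succ, ← mul_assoc, ← mul_pow]; norm_num

theorem eq_pi_of_antitoneOn_cos {φ : ℝ → ℝ} {a e : ℝ} (hae : a ≤ e)
    (hc : ContinuousOn φ (Icc a e)) (hm : MonotoneOn φ (Icc a e)) (ha : φ a ∈ Icc 0 π)
    (hanti : AntitoneOn (cos ∘ φ) (Icc a e)) (he : cos (φ e) = -1) : φ e = π := by
  obtain ⟨k, hk⟩ := cos_eq_neg_one_iff.mp he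
  have hae' : φ a ≤ φ e := hm ⟨le_rfl, hae⟩ ⟨hae, le_rfl⟩ hae
  have hk0 : 0 ≤ k := by
    by_contra! hk0
    have : (k : ℝ) ≤ -1 := by exact_mod_cast Int.le_sub_one_of_lt hk0
    nlinarith [pi_pos, ha.1]
  rcases hk0.eq_or_lt with rfl | hk1
  · simpa using hk.symm
  -- A second half-turn would force the cosine back up from `-1` to `1`.
  have h3 : 3 * π ≤ φ e := by
    have : (1 : ℝ) ≤ k := by exact_mod_cast hk1
    nlinarith [pi_pos]
  obtain ⟨s₁, hs₁, h₁⟩ := intermediate_value_Icc hae hc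
    (show π ∈ Icc (φ a) (φ e) from ⟨ha.2, by linarith [pi_pos]⟩)
  obtain ⟨s₂, hs₂, h₂⟩ := intermediate_value_Icc hae hc
    (show 2 * π ∈ Icc (φ a) (φ e) from ⟨by linarith [ha.2, pi_pos], by linarith [pi_pos]⟩)
  have hs : s₁ ≤ s₂ := by
    by_contra! h
    linarith [hm hs₂ hs₁ h.le, pi_pos]
  have := hanti hs₁ hs₂ hs
  simp only [Function.comp, h₁, h₂, cos_two_pi, cos_pi] at this
  norm_num at this

theorem IsAngleLift.eq_of_halfTurn {u θ : ℝ → ℝ} (hθ : IsAngleLift u θ) {a e : ℝ} {m : ℕ}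
    (hae : a ≤ e) (hsub : Icc a e ⊆ Icc 0 1) (ha : θ a = m * π)
    (hanti : AntitoneOn (fun s => (-1) ^ m * u s) (Icc a e)) (he : u e = (-1) ^ (m + 1)) :
    θ e = (m + 1) * π ∧ ∀ s ∈ Icc a e, θ s = m * π + arccos ((-1) ^ m * u s) := by
  set φ := fun s => θ s - m * π
  have hcos : ∀ s ∈ Icc a e, cos (φ s) = (-1) ^ m * u s := fun s hs => by
    rw [cos_sub_nat_mul_pi, hθ.cos_eq s (hsub hs)]
  have hφm : MonotoneOn φ (Icc a e) := fun x hx y hy hxy =>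
    sub_le_sub_right (hθ.monotoneOn (hsub hx) (hsub hy) hxy) _
  have hφa : φ a = 0 := sub_eq_zero.mpr ha
  have hφe : φ e = π := by
    refine eq_pi_of_antitoneOn_cos hae ((hθ.continuousOn.mono hsub).sub continuousOn_const) hφm
      (by simp [hφa, pi_pos.le]) (fun x hx y hy hxy => ?_) ?_
    · simp only [Function.comp, hcos x hx, hcos y hy]
      exact hanti hx hy hxy
    · rw [hcos e ⟨hae, le_rfl⟩, he, neg_one_pow_mul_neg_one_pow_succ]
  refine ⟨by linarith [show φ e = θ e - m * π from rfl], fun s hs => ?_⟩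
  have hφs : φ s ∈ Icc 0 π :=
    ⟨hφa ▸ hφm ⟨le_rfl, hae⟩ hs hs.1, hφe ▸ hφm hs ⟨hae, le_rfl⟩ hs.2⟩
  rw [← hcos s hs, arccos_cos hφs.1 hφs.2]
  ring

structure IsZigzagPartition (u : ℝ → ℝ) (n : ℕ) (t : ℕ → ℝ) : Prop where
  t_zero : t 0 = 0
  t_last : t n = 1
  t_lt_succ : ∀ i < n, t i < t (i + 1)
  u_t : ∀ i ≤ n, u (t i) = (-1) ^ (i + 1)
  antitoneOn : ∀ i < n, AntitoneOn (fun s => (-1) ^ (i + 1) * u s) (Icc (t i) (t (i + 1)))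

/-- On the `i`-th piece the angle sweeps `arccos ((-1) ^ (i + 1) * u)` from `0` to `π`;
clamping `s` to that piece makes each summand constant outside it. -/
noncomputable def zigzagAngle (u : ℝ → ℝ) (n : ℕ) (t : ℕ → ℝ) (s : ℝ) : ℝ :=
  π + ∑ i ∈ Finset.range n, arccos ((-1) ^ (i + 1) * u (max (t i) (min s (t (i + 1)))))

namespace IsZigzagPartition

variable {u θ : ℝ → ℝ} {n : ℕ} {t : ℕ → ℝ}

theorem monotoneOn (h : IsZigzagPartition u n t) : MonotoneOn t (Iic n) :=
  (strictMonoOn_Iic_of_lt_succ fun i hi => by simpa using h.t_lt_succ i hi).monotoneOn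

theorem pos (h : IsZigzagPartition u n t) : 0 < n := by
  refine Nat.pos_of_ne_zero fun hn => ?_
  have := h.t_last
  rw [hn, h.t_zero] at this
  norm_num at this

theorem Icc_subset {i : ℕ} (h : IsZigzagPartition u n t) (hi : i < n) :
    Icc (t i) (t (i + 1)) ⊆ Icc 0 1 :=
  Icc_subset_Icc (h.t_zero ▸ h.monotoneOn (Nat.zero_le n) hi.le (Nat.zero_le i))
    (h.t_last ▸ h.monotoneOn hi (mem_Iic.2 le_rfl) hi)

theorem exists_mem_Icc (h : IsZigzagPartition u n t) {s : ℝ} (hs : s ∈ Icc (0 : ℝ) 1) :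
    ∃ i < n, s ∈ Icc (t i) (t (i + 1)) := by
  classical
  have hlast : s ≤ t (n - 1 + 1) := by rw [Nat.sub_add_cancel h.pos, h.t_last]; exact hs.2
  have hex : ∃ i, s ≤ t (i + 1) := ⟨n - 1, hlast⟩
  refine ⟨Nat.find hex, ?_, ?_, Nat.find_spec hex⟩
  · have := Nat.find_min' hex hlast
    have := h.pos
    omega
  · by_cases h0 : Nat.find hex = 0
    · rw [h0, h.t_zero]; exact hs.1
    · have := Nat.find_min hex (Nat.sub_one_lt h0)
      rw [Nat.sub_add_cancel (Nat.pos_of_ne_zero h0)] at this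
      exact (not_le.mp this).le

theorem lift_t (h : IsZigzagPartition u n t) (hθ : IsAngleLift u θ) :
    ∀ i ≤ n, θ (t i) = ((i : ℝ) + 1) * π := by
  intro i
  induction i with
  | zero => intro _; simp [h.t_zero, hθ.map_zero]
  | succ i ih =>
    intro hi
    have := (hθ.eq_of_halfTurn (m := i + 1) (h.t_lt_succ i hi).le (h.Icc_subset hi)
      (by exact_mod_cast ih (by omega)) (h.antitoneOn i hi) (h.u_t (i + 1) hi)).1
    exact_mod_cast this

theorem lift_eq (h : IsZigzagPartition u n t) (hθ : IsAngleLift u θ) {i : ℕ} (hi : i < n)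
    {s : ℝ} (hs : s ∈ Icc (t i) (t (i + 1))) :
    θ s = ((i : ℝ) + 1) * π + arccos ((-1) ^ (i + 1) * u s) := by
  have := (hθ.eq_of_halfTurn (m := i + 1) (h.t_lt_succ i hi).le (h.Icc_subset hi)
    (by exact_mod_cast h.lift_t hθ i hi.le) (h.antitoneOn i hi) (h.u_t (i + 1) hi)).2 s hs
  exact_mod_cast this

theorem eqOn_of_isAngleLift (h : IsZigzagPartition u n t) {θ' : ℝ → ℝ} (hθ : IsAngleLift u θ)
    (hθ' : IsAngleLift u θ') : EqOn θ θ' (Icc 0 1) := fun s hs => by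
  obtain ⟨i, hi, hsi⟩ := h.exists_mem_Icc hs
  rw [h.lift_eq hθ hi hsi, h.lift_eq hθ' hi hsi]

theorem zigzagAngle_eq (h : IsZigzagPartition u n t) {j : ℕ} (hj : j < n) {s : ℝ}
    (hs : s ∈ Icc (t j) (t (j + 1))) :
    zigzagAngle u n t s = ((j : ℝ) + 1) * π + arccos ((-1) ^ (j + 1) * u s) := by
  have hle : ∀ {i k}, i ≤ k → k ≤ n → t i ≤ t k := fun hik hk =>
    h.monotoneOn (mem_Iic.2 (hik.trans hk)) (mem_Iic.2 hk) hik
  have before : ∀ i ∈ Finset.range j,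
      arccos ((-1) ^ (i + 1) * u (max (t i) (min s (t (i + 1))))) = π := fun i hi => by
    have hi := Finset.mem_range.1 hi
    have hts : t (i + 1) ≤ s := (hle hi hj.le).trans hs.1
    rw [min_eq_right hts, max_eq_right (h.t_lt_succ i (by omega)).le, h.u_t (i + 1) (by omega),
      neg_one_pow_mul_neg_one_pow_succ, arccos_neg_one]
  have after : ∀ i ∈ Finset.Ico (j + 1) n,
      arccos ((-1) ^ (i + 1) * u (max (t i) (min s (t (i + 1))))) = 0 := fun i hi => by
    obtain ⟨hji, hin⟩ := Finset.mem_Ico.1 hi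
    have hst : s ≤ t i := hs.2.trans (hle hji hin.le)
    rw [min_eq_left (hst.trans (h.t_lt_succ i hin).le), max_eq_left hst, h.u_t i hin.le,
      ← mul_pow]
    norm_num
  rw [zigzagAngle, ← Finset.sum_range_add_sum_Ico _ hj.le, Finset.sum_eq_sum_Ico_succ_bot hj,
    Finset.sum_congr rfl before, Finset.sum_congr rfl after, min_eq_left hs.2, max_eq_right hs.1]
  simp only [Finset.sum_const, Finset.card_range, nsmul_eq_mul]
  ring

theorem isAngleLift_zigzagAngle (h : IsZigzagPartition u n t) (hu : ContinuousOn u (Icc 0 1)) :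
    IsAngleLift u (zigzagAngle u n t) := by
  have hclamp : ∀ i < n, ∀ s, max (t i) (min s (t (i + 1))) ∈ Icc (t i) (t (i + 1)) :=
    fun i hi s => ⟨le_max_left _ _, max_le (h.t_lt_succ i hi).le (min_le_right _ _)⟩
  have hclamp_mono : ∀ i, Monotone fun s => max (t i) (min s (t (i + 1))) :=
    fun i x y hxy => max_le_max le_rfl (min_le_min hxy le_rfl)
  have hu_piece : ∀ i < n, ∀ s ∈ Icc (t i) (t (i + 1)), (-1) ^ (i + 1) * u s ∈ Icc (-1 : ℝ) 1 :=
    fun i hi s hs => by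
      have hleft := h.antitoneOn i hi ⟨le_rfl, (h.t_lt_succ i hi).le⟩ hs hs.1
      have hright := h.antitoneOn i hi hs ⟨(h.t_lt_succ i hi).le, le_rfl⟩ hs.2
      simp only [h.u_t i hi.le, h.u_t (i + 1) hi, ← mul_pow, neg_one_pow_mul_neg_one_pow_succ]
        at hleft hright
      exact ⟨hright, by simpa using hleft⟩
  refine ⟨?_, ?_, ?_, fun s hs => ?_⟩
  · refine (continuous_const.add (continuous_finsetSum _ fun i hi => ?_)).continuousOn
    have hi := Finset.mem_range.1 hi
    exact continuous_arccos.comp (continuous_const.mul ((hu.mono (h.Icc_subset hi)).comp_continuous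
      (continuous_const.max (continuous_id.min continuous_const)) (hclamp i hi)))
  · refine fun x _ y _ hxy => add_le_add le_rfl (Finset.sum_le_sum fun i hi => ?_)
    have hi := Finset.mem_range.1 hi
    exact antitone_arccos (h.antitoneOn i hi (hclamp i hi x) (hclamp i hi y) (hclamp_mono i hxy))
  · rw [← h.t_zero, h.zigzagAngle_eq h.pos ⟨le_rfl, (h.t_lt_succ 0 h.pos).le⟩,
      h.u_t 0 (Nat.zero_le n)]
    norm_num
  · obtain ⟨j, hj, hsj⟩ := h.exists_mem_Icc hs
    obtain ⟨hlo, hhi⟩ := hu_piece j hj s hsj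
    rw [h.zigzagAngle_eq hj hsj, add_comm,
      show ((j : ℝ) + 1) = ((j + 1 : ℕ) : ℝ) by push_cast; ring, cos_add_nat_mul_pi,
      cos_arccos hlo hhi, ← mul_assoc, ← mul_pow]
    norm_num

end IsZigzagPartition

theorem isZigzagPartition_two_mul_sub_one {b : ℝ → ℝ} {n : ℕ} {t : ℕ → ℝ} (ht0 : t 0 = 0)
    (htn : t n = 1) (hlt : ∀ i < n, t i < t (i + 1))
    (hv : ∀ i ≤ n, b (t i) = if Odd i then 1 else 0)
    (hm : ∀ i, 1 ≤ i → i ≤ n →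
      if Odd i then MonotoneOn b (Icc (t (i - 1)) (t i))
      else AntitoneOn b (Icc (t (i - 1)) (t i))) :
    IsZigzagPartition (fun s => 2 * b s - 1) n t where
  t_zero := ht0
  t_last := htn
  t_lt_succ := hlt
  u_t i hi := by
    rcases Nat.even_or_odd i with he | ho
    · rw [hv i hi, if_neg (Nat.not_odd_iff_even.2 he), he.add_one.neg_one_pow]; norm_num
    · rw [hv i hi, if_pos ho, ho.add_one.neg_one_pow]; norm_num
  antitoneOn i hi x hx y hy hxy := by
    have hmi := hm (i + 1) (by omega) hi
    rw [Nat.add_sub_cancel] at hmi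
    rcases Nat.even_or_odd (i + 1) with he | ho
    · rw [if_neg (Nat.not_odd_iff_even.2 he)] at hmi
      simp only [he.neg_one_pow, one_mul]
      linarith [hmi hx hy hxy]
    · rw [if_pos ho] at hmi
      simp only [ho.neg_one_pow]
      linarith [hmi hx hy hxy]

theorem IsZigzag.exists_isAngleLift {b : ℝ → ℝ} {n : ℕ} (hb : IsZigzag b n) :
    ∃ Θ, IsAngleLift (fun s => 2 * b s - 1) Θ ∧ Θ 1 = (n + 1) * π ∧
      ∀ θ, IsAngleLift (fun s => 2 * b s - 1) θ → EqOn θ Θ (Icc 0 1) := by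
  obtain ⟨hc, -, ⟨rfl, hz⟩ | ⟨-, t, ht0, htn, hlt, hv, hm⟩⟩ := hb
  · have hcos : ∀ s ∈ Icc (0 : ℝ) 1, 2 * b s - 1 = -1 := fun s hs => by rw [hz s hs]; norm_num
    refine ⟨fun _ => π, ⟨continuousOn_const, monotoneOn_const, rfl, fun s hs => ?_⟩, by simp,
      fun θ hθ s hs => ?_⟩
    · rw [cos_pi, hcos s hs]
    have hθcos : ∀ s ∈ Icc (0 : ℝ) 1, cos (θ s) = -1 := fun s hs =>
      (hθ.cos_eq s hs).trans (hcos s hs)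
    have hθ1 : θ 1 = π := eq_pi_of_antitoneOn_cos zero_le_one hθ.continuousOn hθ.monotoneOn
      (by simp [hθ.map_zero, pi_pos.le])
      (fun x hx y hy _ => by simp only [Function.comp, hθcos x hx, hθcos y hy, le_rfl])
      (hθcos 1 ⟨zero_le_one, le_rfl⟩)
    exact le_antisymm (hθ1 ▸ hθ.monotoneOn hs ⟨zero_le_one, le_rfl⟩ hs.2)
      (hθ.map_zero ▸ hθ.monotoneOn ⟨le_rfl, zero_le_one⟩ hs hs.1)
  · have h := isZigzagPartition_two_mul_sub_one ht0 htn hlt hv hm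
    have hΘ := h.isAngleLift_zigzagAngle ((continuousOn_const.mul hc).sub continuousOn_const)
    refine ⟨zigzagAngle _ n t, hΘ, ?_, fun θ hθ => h.eqOn_of_isAngleLift hθ hΘ⟩
    simpa [htn] using h.lift_t hΘ n le_rfl

theorem isAngleLift_IccExtend {u : ℝ → ℝ} {θ : Icc (0 : ℝ) 1 → ℝ} (hc : Continuous θ)
    (hm : Monotone θ) (h0 : θ ⟨0, by norm_num⟩ = π) (hcos : ∀ s, cos (θ s) = u s) :
    IsAngleLift u (IccExtend zero_le_one θ) where
  continuousOn := (continuous_IccExtend_iff.2 hc).continuousOn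
  monotoneOn := (Monotone.IccExtend _ hm).monotoneOn _
  map_zero := by rw [IccExtend_of_mem _ _ ⟨le_rfl, zero_le_one⟩]; exact h0
  cos_eq s hs := by rw [IccExtend_of_mem _ _ hs]; exact hcos _

theorem zigzag_unique_lift (b : ℝ → ℝ) (n : ℕ) (hb : IsZigzag b n) :
    (∃! θ : Icc (0:ℝ) 1 → ℝ, Continuous θ ∧ Monotone θ ∧
      θ ⟨0, by norm_num⟩ = Real.pi ∧
      ∀ t : Icc (0:ℝ) 1, Real.cos (θ t) = 2 * b t - 1) ∧
    (∀ θ : Icc (0:ℝ) 1 → ℝ, Continuous θ → Monotone θ →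
      θ ⟨0, by norm_num⟩ = Real.pi →
      (∀ t : Icc (0:ℝ) 1, Real.cos (θ t) = 2 * b t - 1) →
      θ ⟨1, by norm_num⟩ = (n + 1) * Real.pi) := by
  obtain ⟨Θ, hΘ, hΘ1, hunique⟩ := hb.exists_isAngleLift
  have hagree : ∀ θ : Icc (0 : ℝ) 1 → ℝ, Continuous θ → Monotone θ → θ ⟨0, by norm_num⟩ = π →
      (∀ s, cos (θ s) = 2 * b s - 1) → ∀ s, θ s = Θ s := fun θ hc hm h0 hcos s => by
    simpa [IccExtend_of_mem _ _ s.2] using hunique _ (isAngleLift_IccExtend hc hm h0 hcos) s.2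
  refine ⟨⟨fun s => Θ s, ⟨hΘ.continuousOn.domRestrict, fun x y hxy => hΘ.monotoneOn x.2 y.2 hxy,
    hΘ.map_zero, fun s => hΘ.cos_eq s s.2⟩, fun θ ⟨hc, hm, h0, hcos⟩ => funext <|
    hagree θ hc hm h0 hcos⟩, fun θ hc hm h0 hcos => (hagree θ hc hm h0 hcos _).trans hΘ1⟩
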